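/- arXiv:2310.08662 — 6 statements merged into one kernel-verified Lean document; each statement's English description precedes it below -/
import Mathlib

section
/- Arbitrary eigenvalue assignment, general input-coefficient case (Theorem 1, general b̂): For every a1, a2, a3 ∈ ℝ, every b, b̂ ∈ ℝ with b ≠ 0 and b̂ ≠ 0, and every q0*, q1*, q2*, q3*, q4*, q5*, q6* ∈ ℝ, there exist k1, k2, k3, g1, g2, g3, g4 ∈ ℝ satisfying, with r = b/b̂: q6* = g1 + k3 − a3; q5* = g2 + k2 + g1·k3 − a2 − a3·(g1 + k3); q4* = g3 + k1 + g1·k2 + g2·k3 − a1 − a2·(g1 + k3) − a3·(k2 + g2 + g1·k3); q3* = r·(g4 + g1·k1 + g2·k2 + g3·k3) − a1·(g1 + k3) − a2·(g2 + k2 + g1·k3) − a3·(g3 + k1 + g1·k2 + g2·k3); q2* = r·(g2·k1 + g3·k2 + g4·k3) − a1·(g2 + k2 + g1·k3) − a2·(g3 + k1 + g1·k2 + g2·k3); q1* = r·(g3·k1 + g4·k2) − a1·(g1·k2 + g3 + k1 + g2·k3); q0* = r·g4·k1. -/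
open Polynomial in
private lemma adrc_extract_factor (f : ℝ[X]) (hf : f.Monic) (hd : 1 ≤ f.natDegree) :
    ∃ d g : ℝ[X], d.Monic ∧ g.Monic ∧ (d.natDegree = 1 ∨ d.natDegree = 2) ∧
      f = d * g ∧ g.natDegree = f.natDegree - d.natDegree := by
  have hnu : ¬ IsUnit f := by
    intro h
    have := natDegree_eq_zero_of_isUnit h
    omega
  obtain ⟨d, hdm, hdi, hdvd⟩ := f.exists_monic_irreducible_factor hnu
  obtain ⟨g, rfl⟩ := hdvd
  have hgm : g.Monic := hdm.of_mul_monic_left hf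
  have hd2 : d.natDegree ≤ 2 := hdi.natDegree_le_two
  have hd1 : 1 ≤ d.natDegree := by
    rcases Nat.eq_zero_or_pos d.natDegree with h0 | h
    · exact absurd (hdm.natDegree_eq_zero.mp h0 ▸ isUnit_one) hdi.not_isUnit
    · exact h
  refine ⟨d, g, hdm, hgm, by omega, rfl, ?_⟩
  rw [hdm.natDegree_mul hgm]
  omega

open Polynomial in
/-- Every monic real polynomial of degree 7 is a product of a monic cubic and a
monic quartic. -/
private lemma adrc_cubic_quartic (f : ℝ[X]) (hf : f.Monic) (hd : f.natDegree = 7) :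
    ∃ g h : ℝ[X], g.Monic ∧ h.Monic ∧ g.natDegree = 3 ∧ h.natDegree = 4 ∧ f = g * h := by
  obtain ⟨d1, f1, hd1m, hf1m, hd1, rfl, hf1⟩ := adrc_extract_factor f hf (by omega)
  rw [hd] at hf1
  obtain ⟨d2, f2, hd2m, hf2m, hd2, rfl, hf2⟩ := adrc_extract_factor f1 hf1m (by omega)
  rw [hf1] at hf2
  rcases hd1 with h1 | h1 <;> rcases hd2 with h2 | h2
  · obtain ⟨d3, f3, hd3m, hf3m, hd3, rfl, hf3⟩ := adrc_extract_factor f2 hf2m (by omega)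
    rw [hf2, h1, h2] at hf3
    rcases hd3 with h3 | h3
    · exact ⟨d1 * d2 * d3, f3, (hd1m.mul hd2m).mul hd3m, hf3m,
        by rw [(hd1m.mul hd2m).natDegree_mul hd3m, hd1m.natDegree_mul hd2m]; omega,
        by omega, by ring⟩
    · exact ⟨d1 * d3, d2 * f3, hd1m.mul hd3m, hd2m.mul hf3m,
        by rw [hd1m.natDegree_mul hd3m]; omega,
        by rw [hd2m.natDegree_mul hf3m]; omega, by ring⟩
  · exact ⟨d1 * d2, f2, hd1m.mul hd2m, hf2m,
      by rw [hd1m.natDegree_mul hd2m]; omega, by omega, by ring⟩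
  · exact ⟨d1 * d2, f2, hd1m.mul hd2m, hf2m,
      by rw [hd1m.natDegree_mul hd2m]; omega, by omega, by ring⟩
  · exact ⟨f2, d1 * d2, hf2m, hd1m.mul hd2m, by omega,
      by rw [hd1m.natDegree_mul hd2m]; omega, by ring⟩

open Polynomial in
private lemma adrc_cubic_form (g : ℝ[X]) (hm : g.Monic) (h3 : g.natDegree = 3) :
    g = X^3 + C (g.coeff 2) * X^2 + C (g.coeff 1) * X + C (g.coeff 0) := by
  have hsum := g.as_sum_range' 4 (by omega)
  rw [hsum]
  have hc : g.coeff 3 = 1 := by simpa [h3] using hm.coeff_natDegree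
  simp [Finset.sum_range_succ, hc, ← C_mul_X_pow_eq_monomial]
  ring

open Polynomial in
private lemma adrc_quartic_form (g : ℝ[X]) (hm : g.Monic) (h4 : g.natDegree = 4) :
    g = X^4 + C (g.coeff 3) * X^3 + C (g.coeff 2) * X^2 + C (g.coeff 1) * X + C (g.coeff 0) := by
  have hsum := g.as_sum_range' 5 (by omega)
  rw [hsum]
  have hc : g.coeff 4 = 1 := by simpa [h4] using hm.coeff_natDegree
  simp [Finset.sum_range_succ, hc, ← C_mul_X_pow_eq_monomial]
  ring

open Polynomial in
/-- Any tuple of real numbers arises as the coefficient tuple of a product of a monic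
cubic and a monic quartic polynomial. -/
private lemma adrc_solve (p0 p1 p2 p3 p4 p5 p6 : ℝ) :
    ∃ k1 k2 k3 g1 g2 g3 g4 : ℝ,
      p6 = g1 + k3 ∧ p5 = g2 + k2 + g1 * k3 ∧ p4 = g3 + k1 + g1 * k2 + g2 * k3 ∧
      p3 = g4 + g1 * k1 + g2 * k2 + g3 * k3 ∧ p2 = g2 * k1 + g3 * k2 + g4 * k3 ∧
      p1 = g3 * k1 + g4 * k2 ∧ p0 = g4 * k1 := by
  have hmon : ((X:ℝ[X])^7 + C p6 * X^6 + C p5 * X^5 + C p4 * X^4 + C p3 * X^3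
      + C p2 * X^2 + C p1 * X + C p0).Monic := by monicity!
  have hdeg : ((X:ℝ[X])^7 + C p6 * X^6 + C p5 * X^5 + C p4 * X^4 + C p3 * X^3
      + C p2 * X^2 + C p1 * X + C p0).natDegree = 7 := by compute_degree!
  obtain ⟨g, h, hgm, hhm, hg3, hh4, hfgh⟩ := adrc_cubic_quartic _ hmon hdeg
  have hgf := adrc_cubic_form g hgm hg3
  have hhf := adrc_quartic_form h hhm hh4
  set k1 := g.coeff 0 with hk1
  set k2 := g.coeff 1 with hk2
  set k3 := g.coeff 2 with hk3
  set g4 := h.coeff 0 with hg4v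
  set g3' := h.coeff 1 with hg3v
  set g2 := h.coeff 2 with hg2v
  set g1 := h.coeff 3 with hg1v
  have E : (X:ℝ[X])^7 + C p6 * X^6 + C p5 * X^5 + C p4 * X^4 + C p3 * X^3
        + C p2 * X^2 + C p1 * X + C p0
      = X^7 + C (g1 + k3) * X^6
        + C (g2 + k2 + g1 * k3) * X^5
        + C (g3' + k1 + g1 * k2 + g2 * k3) * X^4
        + C (g4 + g1 * k1 + g2 * k2 + g3' * k3) * X^3
        + C (g2 * k1 + g3' * k2 + g4 * k3) * X^2
        + C (g3' * k1 + g4 * k2) * X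
        + C (g4 * k1) := by
    rw [hfgh, hgf, hhf]
    simp only [map_add, map_mul]
    ring
  refine ⟨k1, k2, k3, g1, g2, g3', g4, ?_, ?_, ?_, ?_, ?_, ?_, ?_⟩
  · have := congrArg (fun q => Polynomial.coeff q 6) E
    simp [add_mul, mul_assoc, coeff_X_pow] at this; linear_combination this
  · have := congrArg (fun q => Polynomial.coeff q 5) E
    simp [add_mul, mul_assoc, coeff_X_pow] at this; linear_combination this
  · have := congrArg (fun q => Polynomial.coeff q 4) E
    simp [add_mul, mul_assoc, coeff_X_pow] at this; linear_combination this
  · have := congrArg (fun q => Polynomial.coeff q 3) E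
    simp [add_mul, mul_assoc, coeff_X_pow] at this; linear_combination this
  · have := congrArg (fun q => Polynomial.coeff q 2) E
    simp [add_mul, mul_assoc, coeff_X_pow] at this; linear_combination this
  · have := congrArg (fun q => Polynomial.coeff q 1) E
    simp [add_mul, mul_assoc, coeff_X_pow] at this; linear_combination this
  · have := congrArg (fun q => Polynomial.coeff q 0) E
    simp [add_mul, mul_assoc, coeff_X_pow] at this; linear_combination this

/-- Arbitrary eigenvalue assignment, general input-coefficient case (Theorem 1, general b̂):
the coefficient-matching system is solvable for any plant parameters and desired coefficients. -/
theorem adrc_coefficient_matching_general_bhat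
    (a1 a2 a3 b bhat : ℝ) (hb : b ≠ 0) (hbhat : bhat ≠ 0)
    (q0 q1 q2 q3 q4 q5 q6 : ℝ) :
    ∃ k1 k2 k3 g1 g2 g3 g4 : ℝ,
      q6 = g1 + k3 - a3 ∧
      q5 = g2 + k2 + g1 * k3 - a2 - a3 * (g1 + k3) ∧
      q4 = g3 + k1 + g1 * k2 + g2 * k3 - a1 - a2 * (g1 + k3)
            - a3 * (k2 + g2 + g1 * k3) ∧
      q3 = (b / bhat) * (g4 + g1 * k1 + g2 * k2 + g3 * k3) - a1 * (g1 + k3)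
            - a2 * (g2 + k2 + g1 * k3) - a3 * (g3 + k1 + g1 * k2 + g2 * k3) ∧
      q2 = (b / bhat) * (g2 * k1 + g3 * k2 + g4 * k3) - a1 * (g2 + k2 + g1 * k3)
            - a2 * (g3 + k1 + g1 * k2 + g2 * k3) ∧
      q1 = (b / bhat) * (g3 * k1 + g4 * k2) - a1 * (g1 * k2 + g3 + k1 + g2 * k3) ∧
      q0 = (b / bhat) * (g4 * k1) := by
  set r : ℝ := b / bhat with hr
  have hrne : r ≠ 0 := div_ne_zero hb hbhat
  set p6 : ℝ := q6 + a3 with hp6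
  set p5 : ℝ := q5 + a2 + a3 * p6 with hp5
  set p4 : ℝ := q4 + a1 + a2 * p6 + a3 * p5 with hp4
  set p3 : ℝ := (q3 + a1 * p6 + a2 * p5 + a3 * p4) / r with hp3
  set p2 : ℝ := (q2 + a1 * p5 + a2 * p4) / r with hp2
  set p1 : ℝ := (q1 + a1 * p4) / r with hp1
  set p0 : ℝ := q0 / r with hp0
  have hq3 : r * p3 = q3 + a1 * p6 + a2 * p5 + a3 * p4 := by
    rw [hp3]; field_simp
  have hq2 : r * p2 = q2 + a1 * p5 + a2 * p4 := by rw [hp2]; field_simp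
  have hq1 : r * p1 = q1 + a1 * p4 := by rw [hp1]; field_simp
  have hq0 : r * p0 = q0 := by rw [hp0]; field_simp
  obtain ⟨k1, k2, k3, g1, g2, g3, g4, e6, e5, e4, e3, e2, e1, e0⟩ :=
    adrc_solve p0 p1 p2 p3 p4 p5 p6
  refine ⟨k1, k2, k3, g1, g2, g3, g4, ?_, ?_, ?_, ?_, ?_, ?_, ?_⟩
  · linear_combination e6 - hp6
  · linear_combination e5 - hp5 - a3 * e6
  · linear_combination e4 - hp4 - a2 * e6 - a3 * e5
  · linear_combination r * e3 - hq3 - a1 * e6 - a2 * e5 - a3 * e4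
  · linear_combination r * e2 - hq2 - a1 * e5 - a2 * e4
  · linear_combination r * e1 - hq1 - a1 * e4
  · linear_combination r * e0 - hq0
end

section
/- Nominal closed-loop characteristic polynomial: For all k1, k2, k3, g1, g2, g3, g4 ∈ ℝ, the characteristic polynomial of the nominal closed-loop matrix A_CL(0,k,g) (i.e., A_CL with a1 = a2 = a3 = 0) equals X^7 + q̂6·X^6 + q̂5·X^5 + q̂4·X^4 + q̂3·X^3 + q̂2·X^2 + q̂1·X + q̂0, where q̂6 = g1 + k3; q̂5 = g2 + k2 + g1·k3; q̂4 = g3 + k1 + g1·k2 + g2·k3; q̂3 = g4 + g1·k1 + g2·k2 + g3·k3; q̂2 = g2·k1 + g3·k2 + g4·k3; q̂1 = g3·k1 + g4·k2; q̂0 = g4·k1. -/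
open Polynomial

/-- The 7×7 closed-loop matrix of the third-order plant under linear ADRC (case b̂ = b). -/
def Acl (a1 a2 a3 k1 k2 k3 g1 g2 g3 g4 : ℝ) : Matrix (Fin 7) (Fin 7) ℝ :=
  !![0, 1, 0, 0, 0, 0, 0;
     0, 0, 1, 0, 0, 0, 0;
     a1 - k1, a2 - k2, a3 - k3, -k1, -k2, -k3, -1;
     0, 0, 0, -g1, 1, 0, 0;
     0, 0, 0, -g2, 0, 1, 0;
     -a1, -a2, -a3, -g3, 0, 0, 1;
     0, 0, 0, -g4, 0, 0, 0]

/-! For a = 0 the plant state no longer enters the observer rows, so `Acl 0 0 0 k g` is block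
upper triangular (separation principle): a 3×3 controller block in controllable canonical form
with characteristic polynomial `X³ + k₃X² + k₂X + k₁`, and a 4×4 observer block in observable
canonical form with characteristic polynomial `X⁴ + g₁X³ + g₂X² + g₃X + g₄`. The characteristic
polynomial of the closed loop is their product. -/

open Matrix

section CanonicalForms

variable {R : Type*} [CommRing R]

theorem charpoly_controllerForm_fin_three (k1 k2 k3 : R) :
    (!![0, 1, 0; 0, 0, 1; -k1, -k2, -k3] : Matrix (Fin 3) (Fin 3) R).charpoly
      = X ^ 3 + C k3 * X ^ 2 + C k2 * X + C k1 := by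
  rw [charpoly, det_fin_three]
  simp
  ring

theorem charpoly_observerForm_fin_four (g1 g2 g3 g4 : R) :
    (!![-g1, 1, 0, 0; -g2, 0, 1, 0; -g3, 0, 0, 1; -g4, 0, 0, 0] :
        Matrix (Fin 4) (Fin 4) R).charpoly
      = X ^ 4 + C g1 * X ^ 3 + C g2 * X ^ 2 + C g3 * X + C g4 := by
  rw [charpoly, det_succ_column_zero, Fin.sum_univ_four]
  simp [det_fin_three, Fin.succAbove, submatrix_apply]
  ring

end CanonicalForms

theorem Acl_zero_eq_reindex_fromBlocks (k1 k2 k3 g1 g2 g3 g4 : ℝ) :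
    Acl 0 0 0 k1 k2 k3 g1 g2 g3 g4 =
      reindex finSumFinEquiv finSumFinEquiv
        (fromBlocks !![0, 1, 0; 0, 0, 1; -k1, -k2, -k3]
          !![0, 0, 0, 0; 0, 0, 0, 0; -k1, -k2, -k3, -1] 0
          !![-g1, 1, 0, 0; -g2, 0, 1, 0; -g3, 0, 0, 1; -g4, 0, 0, 0]) := by
  ext i j
  fin_cases i <;> fin_cases j <;> simp [Acl] <;> rfl

/-- Nominal closed-loop characteristic polynomial: explicit formula for the characteristic
polynomial of the nominal closed-loop matrix. -/
theorem adrc_nominal_charpoly (k1 k2 k3 g1 g2 g3 g4 : ℝ) :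
    (Acl 0 0 0 k1 k2 k3 g1 g2 g3 g4).charpoly =
      X ^ 7 + C (g1 + k3) * X ^ 6 + C (g2 + k2 + g1 * k3) * X ^ 5
        + C (g3 + k1 + g1 * k2 + g2 * k3) * X ^ 4
        + C (g4 + g1 * k1 + g2 * k2 + g3 * k3) * X ^ 3
        + C (g2 * k1 + g3 * k2 + g4 * k3) * X ^ 2
        + C (g3 * k1 + g4 * k2) * X
        + C (g4 * k1) := by
  rw [Acl_zero_eq_reindex_fromBlocks, charpoly_reindex, charpoly_fromBlocks_zero₂₁,
    charpoly_controllerForm_fin_three, charpoly_observerForm_fin_four]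
  simp only [C_add, C_mul]
  ring
end

section
/- PID control cannot stabilize the plant when a3 ≥ 0 (appendix, proof of Remark 1): Let a1, a2, a3, b, kP, kD, kI ∈ ℝ with a3 ≥ 0, and let M be the 4×4 real matrix with rows (0,1,0,0); (0,0,1,0); (0,0,0,1); (−b·kI, a1 − b·kP, a2 − b·kD, a3), which is the closed-loop matrix of the third-order relative-degree-3 plant under PID control. Then M is not Hurwitz: there exists z ∈ ℂ which is a root of the characteristic polynomial of M viewed as a complex matrix and satisfies Re(z) ≥ 0. -/
open Polynomial

/-- PID control cannot stabilize the plant when a3 ≥ 0 (appendix, proof of Remark 1):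
the closed-loop matrix of the third-order relative-degree-3 plant under PID control has
an eigenvalue with nonnegative real part. -/
theorem pid_not_hurwitz_of_a3_nonneg
    (a1 a2 a3 b kP kD kI : ℝ) (ha3 : 0 ≤ a3)
    (M : Matrix (Fin 4) (Fin 4) ℝ)
    (hM : M = !![0, 1, 0, 0;
                 0, 0, 1, 0;
                 0, 0, 0, 1;
                 -(b * kI), a1 - b * kP, a2 - b * kD, a3]) :
    ∃ z ∈ ((M.map (algebraMap ℝ ℂ)).charpoly).roots, 0 ≤ z.re := by
  set N := M.map (algebraMap ℝ ℂ) with hN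
  have htrace : N.trace = (a3 : ℂ) := by
    subst hM
    simp [Matrix.trace, Matrix.diag, N, Fin.sum_univ_four]
  have hsum : (N.charpoly.roots).sum = (a3 : ℂ) := by
    rw [← Matrix.trace_eq_sum_roots_charpoly, htrace]
  have hcard : N.charpoly.roots.card = 4 := by
    have := (Polynomial.splits_iff_card_roots.mp (IsAlgClosed.splits N.charpoly))
    rw [this, Matrix.charpoly_natDegree_eq_dim, Fintype.card_fin]
  by_contra h
  push_neg at h
  -- sum of real parts equals a3
  have hre : (N.charpoly.roots.map Complex.re).sum = a3 := by
    have := (Complex.reAddGroupHom).map_multiset_sum N.charpoly.roots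
    simp only [Complex.reAddGroupHom, AddMonoidHom.coe_mk, ZeroHom.coe_mk] at this
    rw [← this, hsum, Complex.ofReal_re]
  -- pick a root
  obtain ⟨z0, hz0⟩ : ∃ z, z ∈ N.charpoly.roots := by
    rcases Multiset.card_pos_iff_exists_mem.mp (by rw [hcard]; norm_num) with ⟨z, hz⟩
    exact ⟨z, hz⟩
  obtain ⟨s, hs⟩ := Multiset.exists_cons_of_mem hz0
  have hz0neg : z0.re < 0 := h z0 hz0
  have hsneg : (s.map Complex.re).sum ≤ 0 := by
    have : ∀ x ∈ s.map Complex.re, x ≤ 0 := by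
      intro x hx
      obtain ⟨z, hz, rfl⟩ := Multiset.mem_map.mp hx
      exact le_of_lt (h z (by rw [hs]; exact Multiset.mem_cons_of_mem hz))
    calc (s.map Complex.re).sum ≤ (s.map Complex.re).card • (0:ℝ) :=
          Multiset.sum_le_card_nsmul _ _ this
      _ = 0 := by simp
  have : (N.charpoly.roots.map Complex.re).sum < 0 := by
    rw [hs, Multiset.map_cons, Multiset.sum_cons]
    linarith
  rw [hre] at this
  linarith
end

section
/- ADRC recovers model-based observer performance (Theorem 2): For all a1, a2, a3 ∈ ℝ, all b ∈ ℝ with b ≠ 0, and all k1*, k2*, k3*, g1*, g2*, g3*, g4* ∈ ℝ, there exist k1, k2, k3, g1, g2, g3, g4 ∈ ℝ such that, in the field of rational functions ℝ(s), (q̂3·s^3 + q̂2·s^2 + q̂1·s + q̂0) / (b·s·(s^3 + q̂6·s^2 + q̂5·s + q̂4)) = N(s) / D(s), where q̂6 = g1 + k3, q̂5 = g2 + k2 + g1·k3, q̂4 = g3 + k1 + g1·k2 + g2·k3, q̂3 = g4 + g1·k1 + g2·k2 + g3·k3, q̂2 = g2·k1 + g3·k2 + g4·k3, q̂1 = g3·k1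 + g4·k2, q̂0 = g4·k1, and N(s) = (g4* + g1*·k1* + g2*·k2* + g3*·k3*)·s^3 + (g2*·k1* + g3*·k2* + g4*·k3* − a3·g4* − a3·g1*·k1* − a3·g2*·k2* + a1·g1*·k3* + a2·g2*·k3*)·s^2 + (g3*·k1* + g4*·k2* + a1·g1*·k2* − a2·g1*·k1* + a1·g2*·k3* − a3·g2*·k1* − a2·g4*)·s + g4*·(k1* − a1), and D(s) = b·s·(s^3 + (g1* + k3* − a3)·s^2 + (g2* + k2* + g1*·k3* − a3·g1* − a2)·s + (g3* + k1* + g1*·k2* + g2*·k3* − a2·g1* − a3·g2* − a1)). -/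
/-!
The seven ADRC coefficients `q̂₆, …, q̂₀` are exactly the non-leading coefficients of the product
`(s⁴ + g₁s³ + g₂s² + g₃s + g₄)(s³ + k₃s² + k₂s + k₁)`. So the ADRC transfer function can be given
any prescribed numerator and denominator of the model-based form as soon as the monic real
septic `s⁷ + c₆s⁶ + ⋯ + c₀` splits into a monic quartic times a monic cubic, and it does, because
irreducible real polynomials have degree at most two.
-/

open Polynomial

namespace Polynomial

lemma IsMonicOfDegree.eq_isMonicOfDegree_two_mul_mul_isMonicOfDegree {f : ℝ[X]} {m n : ℕ}
    (hf : IsMonicOfDegree f (2 * m + n)) :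
    ∃ f₁ f₂ : ℝ[X], IsMonicOfDegree f₁ (2 * m) ∧ IsMonicOfDegree f₂ n ∧ f = f₁ * f₂ := by
  induction m generalizing f with
  | zero => exact ⟨1, f, isMonicOfDegree_zero_iff.mpr rfl, by simpa using hf, (one_mul f).symm⟩
  | succ m ih =>
    rw [show 2 * (m + 1) + n = 2 * m + n + 2 by ring] at hf
    obtain ⟨f₁, f₂, h₁, h₂, rfl⟩ := hf.eq_isMonicOfDegree_two_mul_isMonicOfDegree
    obtain ⟨g₁, g₂, hg₁, hg₂, rfl⟩ := ih h₂
    refine ⟨f₁ * g₁, g₂, ?_, hg₂, (mul_assoc ..).symm⟩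
    convert h₁.mul hg₁ using 1
    ring

variable {R : Type*} [CommSemiring R] {p : R[X]}

lemma IsMonicOfDegree.exists_eq_cubic (hp : IsMonicOfDegree p 3) :
    ∃ a b c : R, p = X ^ 3 + C a * X ^ 2 + C b * X + C c := by
  have h := hp.monic.as_sum
  rw [hp.natDegree_eq] at h
  refine ⟨p.coeff 2, p.coeff 1, p.coeff 0, h.trans ?_⟩
  simp only [Finset.sum_range_succ, Finset.sum_range_zero]
  ring

lemma IsMonicOfDegree.exists_eq_quartic (hp : IsMonicOfDegree p 4) :
    ∃ a b c d : R, p = X ^ 4 + C a * X ^ 3 + C b * X ^ 2 + C c * X + C d := by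
  have h := hp.monic.as_sum
  rw [hp.natDegree_eq] at h
  refine ⟨p.coeff 3, p.coeff 2, p.coeff 1, p.coeff 0, h.trans ?_⟩
  simp only [Finset.sum_range_succ, Finset.sum_range_zero]
  ring

end Polynomial

theorem exists_adrc_gains (c6 c5 c4 c3 c2 c1 c0 : ℝ) :
    ∃ k1 k2 k3 g1 g2 g3 g4 : ℝ,
      g1 + k3 = c6 ∧ g2 + k2 + g1 * k3 = c5 ∧ g3 + k1 + g1 * k2 + g2 * k3 = c4 ∧
      g4 + g1 * k1 + g2 * k2 + g3 * k3 = c3 ∧ g2 * k1 + g3 * k2 + g4 * k3 = c2 ∧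
      g3 * k1 + g4 * k2 = c1 ∧ g4 * k1 = c0 := by
  have hp : IsMonicOfDegree (X ^ 7 + C c6 * X ^ 6 + C c5 * X ^ 5 + C c4 * X ^ 4 + C c3 * X ^ 3
      + C c2 * X ^ 2 + C c1 * X + C c0) (2 * 2 + 3) := ⟨by compute_degree!, by monicity!⟩
  obtain ⟨P, Q, hP, hQ, hPQ⟩ := hp.eq_isMonicOfDegree_two_mul_mul_isMonicOfDegree
  obtain ⟨g1, g2, g3, g4, rfl⟩ := hP.exists_eq_quartic
  obtain ⟨k3, k2, k1, rfl⟩ := hQ.exists_eq_cubic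
  have hexpand : X ^ 7 + C c6 * X ^ 6 + C c5 * X ^ 5 + C c4 * X ^ 4 + C c3 * X ^ 3
      + C c2 * X ^ 2 + C c1 * X + C c0 =
      X ^ 7 + C (g1 + k3) * X ^ 6 + C (g2 + k2 + g1 * k3) * X ^ 5
        + C (g3 + k1 + g1 * k2 + g2 * k3) * X ^ 4 + C (g4 + g1 * k1 + g2 * k2 + g3 * k3) * X ^ 3
        + C (g2 * k1 + g3 * k2 + g4 * k3) * X ^ 2 + C (g3 * k1 + g4 * k2) * X + C (g4 * k1) := by
    rw [hPQ]
    simp only [C_add, C_mul]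
    ring
  have hcoeffs := congrArg (fun p ↦ (p.coeff 6, p.coeff 5, p.coeff 4, p.coeff 3, p.coeff 2,
    p.coeff 1, p.coeff 0)) hexpand.symm
  exact ⟨k1, k2, k3, g1, g2, g3, g4, by simpa [-map_add, -map_mul, coeff_X, coeff_C] using hcoeffs⟩

theorem adrc_recovers_model_based_observer_general
    (a1 a2 a3 : ℝ) (b : ℝ)
    (k1' k2' k3' g1' g2' g3' g4' : ℝ) :
    ∃ k1 k2 k3 g1 g2 g3 g4 : ℝ,
      (RatFunc.C (g4 + g1 * k1 + g2 * k2 + g3 * k3) * (RatFunc.X : RatFunc ℝ) ^ 3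
          + RatFunc.C (g2 * k1 + g3 * k2 + g4 * k3) * RatFunc.X ^ 2
          + RatFunc.C (g3 * k1 + g4 * k2) * RatFunc.X
          + RatFunc.C (g4 * k1)) /
        (RatFunc.C b * RatFunc.X *
          (RatFunc.X ^ 3 + RatFunc.C (g1 + k3) * RatFunc.X ^ 2
            + RatFunc.C (g2 + k2 + g1 * k3) * RatFunc.X
            + RatFunc.C (g3 + k1 + g1 * k2 + g2 * k3))) =
      (RatFunc.C (g4' + g1' * k1' + g2' * k2' + g3' * k3') * RatFunc.X ^ 3
          + RatFunc.C (g2' * k1' + g3' * k2' + g4' * k3' - a3 * g4' - a3 * g1' * k1'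
              - a3 * g2' * k2' + a1 * g1' * k3' + a2 * g2' * k3') * RatFunc.X ^ 2
          + RatFunc.C (g3' * k1' + g4' * k2' + a1 * g1' * k2' - a2 * g1' * k1'
              + a1 * g2' * k3' - a3 * g2' * k1' - a2 * g4') * RatFunc.X
          + RatFunc.C (g4' * (k1' - a1))) /
        (RatFunc.C b * RatFunc.X *
          (RatFunc.X ^ 3 + RatFunc.C (g1' + k3' - a3) * RatFunc.X ^ 2
            + RatFunc.C (g2' + k2' + g1' * k3' - a3 * g1' - a2) * RatFunc.X
            + RatFunc.C (g3' + k1' + g1' * k2' + g2' * k3' - a2 * g1' - a3 * g2' - a1))) := by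
  obtain ⟨k1, k2, k3, g1, g2, g3, g4, h6, h5, h4, h3, h2, h1, h0⟩ := exists_adrc_gains
    (g1' + k3' - a3) (g2' + k2' + g1' * k3' - a3 * g1' - a2)
    (g3' + k1' + g1' * k2' + g2' * k3' - a2 * g1' - a3 * g2' - a1)
    (g4' + g1' * k1' + g2' * k2' + g3' * k3')
    (g2' * k1' + g3' * k2' + g4' * k3' - a3 * g4' - a3 * g1' * k1' - a3 * g2' * k2'
      + a1 * g1' * k3' + a2 * g2' * k3')
    (g3' * k1' + g4' * k2' + a1 * g1' * k2' - a2 * g1' * k1' + a1 * g2' * k3' - a3 * g2' * k1'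
      - a2 * g4')
    (g4' * (k1' - a1))
  exact ⟨k1, k2, k3, g1, g2, g3, g4, by rw [h6, h5, h4, h3, h2, h1, h0]⟩

/-- ADRC recovers model-based observer performance (Theorem 2): the ADRC controller transfer
function can match the transfer function of the model-based extended observer controller. -/
theorem adrc_recovers_model_based_observer
    (a1 a2 a3 : ℝ) (b : ℝ) (hb : b ≠ 0)
    (k1' k2' k3' g1' g2' g3' g4' : ℝ) :
    ∃ k1 k2 k3 g1 g2 g3 g4 : ℝ,
      (RatFunc.C (g4 + g1 * k1 + g2 * k2 + g3 * k3) * (RatFunc.X : RatFunc ℝ) ^ 3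
          + RatFunc.C (g2 * k1 + g3 * k2 + g4 * k3) * RatFunc.X ^ 2
          + RatFunc.C (g3 * k1 + g4 * k2) * RatFunc.X
          + RatFunc.C (g4 * k1)) /
        (RatFunc.C b * RatFunc.X *
          (RatFunc.X ^ 3 + RatFunc.C (g1 + k3) * RatFunc.X ^ 2
            + RatFunc.C (g2 + k2 + g1 * k3) * RatFunc.X
            + RatFunc.C (g3 + k1 + g1 * k2 + g2 * k3))) =
      (RatFunc.C (g4' + g1' * k1' + g2' * k2' + g3' * k3') * RatFunc.X ^ 3
          + RatFunc.C (g2' * k1' + g3' * k2' + g4' * k3' - a3 * g4' - a3 * g1' * k1'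
              - a3 * g2' * k2' + a1 * g1' * k3' + a2 * g2' * k3') * RatFunc.X ^ 2
          + RatFunc.C (g3' * k1' + g4' * k2' + a1 * g1' * k2' - a2 * g1' * k1'
              + a1 * g2' * k3' - a3 * g2' * k1' - a2 * g4') * RatFunc.X
          + RatFunc.C (g4' * (k1' - a1))) /
        (RatFunc.C b * RatFunc.X *
          (RatFunc.X ^ 3 + RatFunc.C (g1' + k3' - a3) * RatFunc.X ^ 2
            + RatFunc.C (g2' + k2' + g1' * k3' - a3 * g1' - a2) * RatFunc.X
            + RatFunc.C (g3' + k1' + g1' * k2' + g2' * k3' - a2 * g1' - a3 * g2' - a1))) :=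
  adrc_recovers_model_based_observer_general a1 a2 a3 b k1' k2' k3' g1' g2' g3' g4'
end

section
/- Transfer function of the ADRC controller: Let k1, k2, k3, g1, g2, g3, g4 ∈ ℝ, work in the field F = ℝ(s) of rational functions over ℝ, and let M be the 4×4 matrix over F whose entries are the constants given by rows (−g1, 1, 0, 0); (−g2, 0, 1, 0); (−g3 − k1, −k2, −k3, 0); (−g4, 0, 0, 0). Then det(s·I − M) = s^4 + q̂6·s^3 + q̂5·s^2 + q̂4·s (so s·I − M is invertible over F), and the scalar obtained as the product [k1, k2, k3, 1]·(s·I − M)^{-1}·(g1, g2, g3, g4)^T equals (q̂3·s^3 + q̂2·s^2 + q̂1·s + q̂0) / (s^4 + q̂6·s^3 + q̂5·s^2 + q̂4·s), where q̂6 = g1 + k3, q̂5 = g2 + k2 + g1·k3, q̂4 = g3 + k1 + g1·k2 + g2·k3, q̂3 = g4 + g1·k1 + g2·k2 + g3·k3, q̂2 = g2·k1 + g3·k2 + g4·k3, q̂1 = g3·k1 + g4·k2, q̂0 = g4·k1. -/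
/-!
Rather than inverting `s • 1 - M`, exhibit the column `w = adj (s • 1 - M) *ᵥ g` explicitly and
check `(s • 1 - M) *ᵥ w = det (s • 1 - M) • g`; then the transfer function is `(c ⬝ᵥ w) / det`.
Both the determinant and `c ⬝ᵥ w` are polynomial identities valid over any commutative ring.
Over `ℝ(s)` with `s = X` the determinant is the image of a monic quartic, hence nonzero.
-/

open RatFunc Matrix

theorem Matrix.inv_mulVec_of_mulVec_eq_det_smul {K n : Type*} [Field K] [Fintype n]
    [DecidableEq n] {A : Matrix n n K} {v w : n → K} (hA : A.det ≠ 0)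
    (h : A *ᵥ w = A.det • v) : A⁻¹ *ᵥ v = A.det⁻¹ • w := by
  rw [← inv_smul_smul₀ hA v, ← h, mulVec_smul, mulVec_mulVec, nonsing_inv_mul _ hA.isUnit,
    one_mulVec]

namespace ADRC

section CommRing

variable {R : Type*} [CommRing R] (s k1 k2 k3 g1 g2 g3 g4 : R)

def closedLoopMatrix : Matrix (Fin 4) (Fin 4) R :=
  !![-g1, 1, 0, 0;
     -g2, 0, 1, 0;
     -g3 - k1, -k2, -k3, 0;
     -g4, 0, 0, 0]

def denominator : R :=
  s ^ 4 + (g1 + k3) * s ^ 3 + (g2 + k2 + g1 * k3) * s ^ 2 + (g3 + k1 + g1 * k2 + g2 * k3) * s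

def numerator : R :=
  (g4 + g1 * k1 + g2 * k2 + g3 * k3) * s ^ 3 + (g2 * k1 + g3 * k2 + g4 * k3) * s ^ 2
    + (g3 * k1 + g4 * k2) * s + g4 * k1

/-- The column `adj (s • 1 - closedLoopMatrix …) *ᵥ ![g1, g2, g3, g4]`. -/
def adjugateColumn : Fin 4 → R :=
  ![(g1 * s ^ 2 + (g1 * k3 + g2) * s + (g1 * k2 + g2 * k3 + g3)) * s,
    (g2 * s ^ 2 + (g3 + g2 * k3) * s - g1 * k1) * s,
    (g3 * s ^ 2 - (g1 * k1 + g2 * k2) * s - g2 * k1) * s,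
    g4 * (s ^ 3 + k3 * s ^ 2 + k2 * s + k1)]

theorem smul_one_sub_closedLoopMatrix :
    s • 1 - closedLoopMatrix k1 k2 k3 g1 g2 g3 g4 =
      !![s + g1, -1, 0, 0;
         g2, s, -1, 0;
         g3 + k1, k2, s + k3, 0;
         g4, 0, 0, s] := by
  ext i j
  fin_cases i <;> fin_cases j <;> simp [closedLoopMatrix]; ring

theorem det_smul_one_sub_closedLoopMatrix :
    (s • 1 - closedLoopMatrix k1 k2 k3 g1 g2 g3 g4).det = denominator s k1 k2 k3 g1 g2 g3 := by
  rw [smul_one_sub_closedLoopMatrix, det_succ_row_zero]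
  simp [Fin.sum_univ_four, det_fin_three, Fin.succAbove, denominator]
  ring

theorem smul_one_sub_closedLoopMatrix_mulVec_adjugateColumn :
    (s • 1 - closedLoopMatrix k1 k2 k3 g1 g2 g3 g4) *ᵥ adjugateColumn s k1 k2 k3 g1 g2 g3 g4 =
      denominator s k1 k2 k3 g1 g2 g3 • ![g1, g2, g3, g4] := by
  rw [smul_one_sub_closedLoopMatrix]
  ext i
  fin_cases i <;>
    simp [mulVec, dotProduct, Fin.sum_univ_four, adjugateColumn, denominator] <;> ring

theorem dotProduct_adjugateColumn :
    ![k1, k2, k3, 1] ⬝ᵥ adjugateColumn s k1 k2 k3 g1 g2 g3 g4 =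
      numerator s k1 k2 k3 g1 g2 g3 g4 := by
  simp only [dotProduct, Fin.sum_univ_four, adjugateColumn, numerator, Fin.isValue, cons_val_zero,
    cons_val_one, cons_val, one_mul]
  ring

theorem map_denominator {S : Type*} [CommRing S] (f : R →+* S) :
    f (denominator s k1 k2 k3 g1 g2 g3) =
      denominator (f s) (f k1) (f k2) (f k3) (f g1) (f g2) (f g3) := by
  simp [denominator]

theorem monic_denominator :
    (denominator Polynomial.X (Polynomial.C k1) (Polynomial.C k2) (Polynomial.C k3)
      (Polynomial.C g1) (Polynomial.C g2) (Polynomial.C g3)).Monic := by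
  simp only [denominator, ← map_add, ← map_mul]
  nontriviality R
  monicity!

end CommRing

theorem denominator_X_ne_zero {K : Type*} [Field K] (k1 k2 k3 g1 g2 g3 : K) :
    denominator (X : RatFunc K) (C k1) (C k2) (C k3) (C g1) (C g2) (C g3) ≠ 0 := by
  simpa only [map_denominator, algebraMap_X, algebraMap_C] using
    algebraMap_ne_zero (monic_denominator k1 k2 k3 g1 g2 g3).ne_zero

theorem dotProduct_inv_mulVec_eq_numerator_div_denominator {K : Type*} [Field K]
    (s k1 k2 k3 g1 g2 g3 g4 : K) (h : denominator s k1 k2 k3 g1 g2 g3 ≠ 0) :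
    ![k1, k2, k3, 1] ⬝ᵥ ((s • 1 - closedLoopMatrix k1 k2 k3 g1 g2 g3 g4)⁻¹ *ᵥ ![g1, g2, g3, g4]) =
      numerator s k1 k2 k3 g1 g2 g3 g4 / denominator s k1 k2 k3 g1 g2 g3 := by
  have hdet := det_smul_one_sub_closedLoopMatrix s k1 k2 k3 g1 g2 g3 g4
  rw [inv_mulVec_of_mulVec_eq_det_smul (hdet ▸ h)
      (hdet ▸ smul_one_sub_closedLoopMatrix_mulVec_adjugateColumn ..),
    dotProduct_smul, dotProduct_adjugateColumn, hdet, smul_eq_mul, inv_mul_eq_div]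

end ADRC

/-- Transfer function of the ADRC controller: the controller system matrix has the stated
characteristic determinant (hence `s·I − M` is invertible over `ℝ(s)`), and the controller
transfer-function numerator/denominator formula holds. -/
theorem adrc_controller_transfer_function
    (k1 k2 k3 g1 g2 g3 g4 : ℝ) :
    let s : RatFunc ℝ := RatFunc.X
    let M : Matrix (Fin 4) (Fin 4) (RatFunc ℝ) :=
      !![RatFunc.C (-g1), 1, 0, 0;
         RatFunc.C (-g2), 0, 1, 0;
         RatFunc.C (-g3 - k1), RatFunc.C (-k2), RatFunc.C (-k3), 0;
         RatFunc.C (-g4), 0, 0, 0]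
    let S : Matrix (Fin 4) (Fin 4) (RatFunc ℝ) :=
      s • (1 : Matrix (Fin 4) (Fin 4) (RatFunc ℝ)) - M
    S.det = s ^ 4 + RatFunc.C (g1 + k3) * s ^ 3 + RatFunc.C (g2 + k2 + g1 * k3) * s ^ 2
        + RatFunc.C (g3 + k1 + g1 * k2 + g2 * k3) * s ∧
    IsUnit S.det ∧
    dotProduct ![RatFunc.C k1, RatFunc.C k2, RatFunc.C k3, 1]
        (S⁻¹.mulVec ![RatFunc.C g1, RatFunc.C g2, RatFunc.C g3, RatFunc.C g4]) =
      (RatFunc.C (g4 + g1 * k1 + g2 * k2 + g3 * k3) * s ^ 3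
          + RatFunc.C (g2 * k1 + g3 * k2 + g4 * k3) * s ^ 2
          + RatFunc.C (g3 * k1 + g4 * k2) * s
          + RatFunc.C (g4 * k1)) /
        (s ^ 4 + RatFunc.C (g1 + k3) * s ^ 3 + RatFunc.C (g2 + k2 + g1 * k3) * s ^ 2
          + RatFunc.C (g3 + k1 + g1 * k2 + g2 * k3) * s) := by
  intro s M S
  have hM : M = ADRC.closedLoopMatrix (C k1) (C k2) (C k3) (C g1) (C g2) (C g3) (C g4) := by
    simp only [M, ADRC.closedLoopMatrix, map_neg, map_sub]
  have hdet := ADRC.det_smul_one_sub_closedLoopMatrix s (C k1) (C k2) (C k3) (C g1) (C g2) (C g3)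
    (C g4)
  have hne := ADRC.denominator_X_ne_zero k1 k2 k3 g1 g2 g3
  have htf := ADRC.dotProduct_inv_mulVec_eq_numerator_div_denominator s _ _ _ _ _ _ (C g4) hne
  rw [← hM] at hdet htf
  simp only [ADRC.denominator, ADRC.numerator, map_add, map_mul] at hdet hne htf ⊢
  exact ⟨hdet, hdet ▸ hne.isUnit, htf⟩
end

section
/- Closed-loop dynamics of ADRC with exact input-coefficient estimate (derivation of equations (6)-(7)): Let a1, a2, a3, k1, k2, k3, g1, g2, g3, g4 ∈ ℝ, let b ∈ ℝ with b ≠ 0, let d ∈ ℝ be a constant disturbance, and let x1, x2, x3, x̂1, x̂2, x̂3, d̂ : ℝ → ℝ be differentiable functions satisfying, for all t ∈ ℝ, with u(t) = −(1/b)·(k1·x̂1(t) + k2·x̂2(t) + k3·x̂3(t) + d̂(t)): x1' = x2; x2' = x3; x3' = a1·x1 + a2·x2 + a3·x3 + d + b·u; x̂1' = x̂2 − g1·(x̂1 − x1); x̂2' = x̂3 − g2·(x̂1 − x1); x̂3' = d̂ + b·u − g3·(x̂1 − x1); d̂' = −g4·(x̂1 − x1). Then the ℝ^7-valued function w = (x1,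 x2, x3, x̂1 − x1, x̂2 − x2, x̂3 − x3, d̂ − d) satisfies w'(t) = A_CL(a,k,g)·w(t) for all t ∈ ℝ. -/
lemma cons_val_five {α : Type*} {m : ℕ} (x : α) (u : Fin (m+5) → α) :
    Matrix.vecCons x u 5 = Matrix.vecHead (Matrix.vecTail (Matrix.vecTail
      (Matrix.vecTail (Matrix.vecTail u)))) := rfl

lemma cons_val_six {α : Type*} {m : ℕ} (x : α) (u : Fin (m+6) → α) :
    Matrix.vecCons x u 6 = Matrix.vecHead (Matrix.vecTail (Matrix.vecTail
      (Matrix.vecTail (Matrix.vecTail (Matrix.vecTail u))))) := rfl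

set_option maxHeartbeats 1000000 in
/-- Closed-loop dynamics of ADRC with exact input-coefficient estimate (derivation of
equations (6)-(7)): the state/observer-error vector satisfies the linear closed-loop ODE. -/
theorem adrc_closed_loop_dynamics
    (a1 a2 a3 k1 k2 k3 g1 g2 g3 g4 : ℝ) (b : ℝ) (hb : b ≠ 0) (d : ℝ)
    (x1 x2 x3 xh1 xh2 xh3 dh : ℝ → ℝ) (u : ℝ → ℝ)
    (hu : ∀ t, u t = -(1 / b) * (k1 * xh1 t + k2 * xh2 t + k3 * xh3 t + dh t))
    (hx1 : ∀ t, HasDerivAt x1 (x2 t) t)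
    (hx2 : ∀ t, HasDerivAt x2 (x3 t) t)
    (hx3 : ∀ t, HasDerivAt x3 (a1 * x1 t + a2 * x2 t + a3 * x3 t + d + b * u t) t)
    (hxh1 : ∀ t, HasDerivAt xh1 (xh2 t - g1 * (xh1 t - x1 t)) t)
    (hxh2 : ∀ t, HasDerivAt xh2 (xh3 t - g2 * (xh1 t - x1 t)) t)
    (hxh3 : ∀ t, HasDerivAt xh3 (dh t + b * u t - g3 * (xh1 t - x1 t)) t)
    (hdh : ∀ t, HasDerivAt dh (-(g4 * (xh1 t - x1 t))) t) :
    ∀ t : ℝ,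
      HasDerivAt
        (fun t : ℝ => (![x1 t, x2 t, x3 t, xh1 t - x1 t, xh2 t - x2 t,
            xh3 t - x3 t, dh t - d] : Fin 7 → ℝ))
        ((Acl a1 a2 a3 k1 k2 k3 g1 g2 g3 g4).mulVec
          ![x1 t, x2 t, x3 t, xh1 t - x1 t, xh2 t - x2 t, xh3 t - x3 t, dh t - d]) t := by
  intro t
  have hbu : b * u t = -(k1 * xh1 t + k2 * xh2 t + k3 * xh3 t + dh t) := by
    rw [hu t]; field_simp
  have hw : (Acl a1 a2 a3 k1 k2 k3 g1 g2 g3 g4).mulVec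
      ![x1 t, x2 t, x3 t, xh1 t - x1 t, xh2 t - x2 t, xh3 t - x3 t, dh t - d] =
      ![x2 t, x3 t,
        (a1 - k1) * x1 t + (a2 - k2) * x2 t + (a3 - k3) * x3 t
          + (-k1) * (xh1 t - x1 t) + (-k2) * (xh2 t - x2 t) + (-k3) * (xh3 t - x3 t)
          + (-1) * (dh t - d),
        -g1 * (xh1 t - x1 t) + (xh2 t - x2 t),
        -g2 * (xh1 t - x1 t) + (xh3 t - x3 t),
        -a1 * x1 t + -a2 * x2 t + -a3 * x3 t + -g3 * (xh1 t - x1 t) + (dh t - d),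
        -g4 * (xh1 t - x1 t)] := by
    funext i
    fin_cases i <;>
      simp [Acl, Matrix.mulVec, dotProduct, Fin.sum_univ_seven,
        cons_val_five, cons_val_six, Matrix.vecHead, Matrix.vecTail] <;> ring
  rw [hw, hasDerivAt_pi]
  intro i
  fin_cases i
  · exact hx1 t
  · exact hx2 t
  · refine (hx3 t).congr_deriv ?_
    show a1 * x1 t + a2 * x2 t + a3 * x3 t + d + b * u t =
      (a1 - k1) * x1 t + (a2 - k2) * x2 t + (a3 - k3) * x3 t
        + (-k1) * (xh1 t - x1 t) + (-k2) * (xh2 t - x2 t) + (-k3) * (xh3 t - x3 t)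
        + (-1) * (dh t - d)
    rw [hbu]; ring
  · refine ((hxh1 t).sub (hx1 t)).congr_deriv ?_
    show xh2 t - g1 * (xh1 t - x1 t) - x2 t = -g1 * (xh1 t - x1 t) + (xh2 t - x2 t)
    ring
  · refine ((hxh2 t).sub (hx2 t)).congr_deriv ?_
    show xh3 t - g2 * (xh1 t - x1 t) - x3 t = -g2 * (xh1 t - x1 t) + (xh3 t - x3 t)
    ring
  · refine ((hxh3 t).sub (hx3 t)).congr_deriv ?_
    show dh t + b * u t - g3 * (xh1 t - x1 t) -
        (a1 * x1 t + a2 * x2 t + a3 * x3 t + d + b * u t) =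
      -a1 * x1 t + -a2 * x2 t + -a3 * x3 t + -g3 * (xh1 t - x1 t) + (dh t - d)
    ring
  · refine ((hdh t).sub (hasDerivAt_const t d)).congr_deriv ?_
    show -(g4 * (xh1 t - x1 t)) - 0 = -g4 * (xh1 t - x1 t)
    ring
end
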